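/- arXiv:2602.15964 — 4 statements merged into one kernel-verified Lean document; each statement's English description precedes it below -/
import Mathlib

section
/- Let f be a monotone submodular function with f(∅)=0 on finite ground set V, and let OPT = max{f(S) : |S| ≤ k}. Define the greedy sequence S_0 = ∅, S_{i+1} = S_i ∪ {e_i} where e_i maximizes f(S_i ∪ {e}) − f(S_i) over e ∈ V \ S_i. Then for each i ≤ k, OPT − f(S_{i+1}) ≤ (1 − 1/k)(OPT − f(S_i)). -/
lemma submod_telescope {V : Type*} [DecidableEq V]
    (f : Finset V → ℝ)
    (hmono : ∀ A B : Finset V, A ⊆ B → f A ≤ f B)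
    (hsub : ∀ A B : Finset V, f (A ∪ B) + f (A ∩ B) ≤ f A + f B)
    (A : Finset V) (D : Finset V) :
    f (A ∪ D) ≤ f A + ∑ e ∈ D, (f (insert e A) - f A) := by
  induction D using Finset.induction_on with
  | empty => simp
  | @insert x D' hx ih =>
    have hu : A ∪ insert x D' = (A ∪ D') ∪ (A ∪ {x}) := by
      ext y; simp [or_comm, or_assoc, or_left_comm]
    have hi : f A ≤ f ((A ∪ D') ∩ (A ∪ {x})) := by
      apply hmono
      intro y hy
      simp [hy]
    have h1 := hsub (A ∪ D') (A ∪ {x})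
    have hins : A ∪ {x} = insert x A := by
      ext y; simp [or_comm]
    rw [Finset.sum_insert hx]
    rw [hu]
    rw [hins] at h1 hi ⊢
    linarith
/-- Per-step contraction of the greedy algorithm for cardinality-constrained
monotone submodular maximization: OPT − f(S_{i+1}) ≤ (1 − 1/k)(OPT − f(S_i)). -/
theorem greedy_step_contraction {V : Type*} [Fintype V] [DecidableEq V] [Nonempty V]
    (f : Finset V → ℝ) (hempty : f ∅ = 0)
    (hmono : ∀ A B : Finset V, A ⊆ B → f A ≤ f B)
    (hsub : ∀ A B : Finset V, f (A ∪ B) + f (A ∩ B) ≤ f A + f B)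
    (k : ℕ) (hk : 1 ≤ k) (hkcard : k ≤ Fintype.card V)
    (OPT : ℝ)
    (hOPT : IsGreatest {x : ℝ | ∃ T : Finset V, T.card ≤ k ∧ f T = x} OPT)
    (S : ℕ → Finset V) (hS0 : S 0 = ∅)
    (hgreedy : ∀ i ≤ k, ∃ e ∉ S i,
      S (i + 1) = insert e (S i) ∧
      ∀ e' ∉ S i, f (insert e' (S i)) - f (S i) ≤ f (insert e (S i)) - f (S i)) :
    ∀ i ≤ k, OPT - f (S (i + 1)) ≤ (1 - 1 / (k : ℝ)) * (OPT - f (S i)) := by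
  intro i hi
  obtain ⟨e, he, hSe, hmax⟩ := hgreedy i hi
  obtain ⟨⟨T, hTcard, hTval⟩, hub⟩ := hOPT
  set g : ℝ := f (S (i + 1)) - f (S i) with hg
  have hg0 : 0 ≤ g := by
    have := hmono (S i) (S (i + 1)) (by rw [hSe]; exact Finset.subset_insert _ _)
    linarith
  -- key bound: OPT - f (S i) ≤ k * g
  have hkey : OPT - f (S i) ≤ (k : ℝ) * g := by
    have h1 : f T ≤ f (S i ∪ T) := hmono _ _ Finset.subset_union_right
    have h2 := submod_telescope f hmono hsub (S i) T
    -- split sum over T into T \ S i part and the rest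
    have hbound : ∀ x ∈ T, f (insert x (S i)) - f (S i) ≤ g := by
      intro x hx
      by_cases hxS : x ∈ S i
      · rw [Finset.insert_eq_self.2 hxS]; simpa using hg0
      · have := hmax x hxS
        rw [hg, hSe]; linarith
    have hsum : ∑ x ∈ T, (f (insert x (S i)) - f (S i)) ≤ (k : ℝ) * g := by
      calc ∑ x ∈ T, (f (insert x (S i)) - f (S i)) ≤ T.card • g :=
            Finset.sum_le_card_nsmul T _ g hbound
        _ = (T.card : ℝ) * g := by simp [nsmul_eq_mul]
        _ ≤ (k : ℝ) * g := by
            apply mul_le_mul_of_nonneg_right _ hg0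
            exact_mod_cast hTcard
    linarith [hub ⟨T, hTcard, rfl⟩, hTval]
  have hkpos : (0:ℝ) < k := by exact_mod_cast hk
  have : (1 - 1 / (k : ℝ)) * (OPT - f (S i)) = OPT - f (S i) - (OPT - f (S i)) / k := by
    field_simp
  rw [this]
  have : (OPT - f (S i)) / k ≤ g := by
    rw [div_le_iff₀ hkpos]; linarith [hkey]
  have hfs : f (S (i+1)) = f (S i) + g := by simp [hg]
  linarith
end

section
/- Under the greedy recursion for cardinality-constrained monotone submodular maximization, the greedy solution S_k of size k satisfies f(S_k) ≥ (1 − (1 − 1/k)^k) · OPT ≥ (1 − 1/e) · OPT, where OPT = max{f(S) : |S| ≤ k}. -/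
/-- Submodularity implies the marginal-gain bound:
`f (A ∪ B) ≤ f A + ∑_{e ∈ B \ A} (f (insert e A) - f A)`. -/
lemma submodular_marginal_bound {V : Type*} [DecidableEq V]
    (f : Finset V → ℝ)
    (hmono : ∀ A B : Finset V, A ⊆ B → f A ≤ f B)
    (hsub : ∀ A B : Finset V, f (A ∪ B) + f (A ∩ B) ≤ f A + f B)
    (A : Finset V) (B : Finset V) :
    f (A ∪ B) ≤ f A + ∑ e ∈ B \ A, (f (insert e A) - f A) := by
  induction B using Finset.induction with
  | empty => simp
  | @insert a B' ha ih =>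
    have hunion : A ∪ insert a B' = insert a (A ∪ B') := Finset.union_insert _ _ _
    have hsub' := hsub (insert a A) (A ∪ B')
    have hAB : insert a A ∪ (A ∪ B') = insert a (A ∪ B') := by
      rw [Finset.insert_union, ← Finset.union_assoc, Finset.union_self]
    have hAsub : A ⊆ insert a A ∩ (A ∪ B') := by
      intro x hx
      simp [Finset.mem_inter, Finset.mem_insert, Finset.mem_union]
      tauto
    have hA : f A ≤ f (insert a A ∩ (A ∪ B')) := hmono _ _ hAsub
    have hmain : f (A ∪ insert a B') ≤ (f (insert a A) - f A) + f (A ∪ B') := by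
      rw [hunion, ← hAB]
      linarith
    by_cases haA : a ∈ A
    · have h1 : insert a A = A := Finset.insert_eq_self.mpr haA
      have h2 : insert a B' \ A = B' \ A := Finset.insert_sdiff_of_mem _ haA
      rw [h2]
      rw [h1] at hmain
      linarith
    · have h2 : insert a B' \ A = insert a (B' \ A) := Finset.insert_sdiff_of_notMem _ haA
      have haB' : a ∉ B' \ A := fun h => ha (Finset.mem_sdiff.mp h).1
      rw [h2, Finset.sum_insert haB']
      linarith

/-- The greedy solution of size k satisfies
f(S_k) ≥ (1 − (1 − 1/k)^k)·OPT ≥ (1 − 1/e)·OPT. -/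
theorem greedy_approximation {V : Type*} [Fintype V] [DecidableEq V] [Nonempty V]
    (f : Finset V → ℝ) (hnn : ∀ A : Finset V, 0 ≤ f A) (hempty : f ∅ = 0)
    (hmono : ∀ A B : Finset V, A ⊆ B → f A ≤ f B)
    (hsub : ∀ A B : Finset V, f (A ∪ B) + f (A ∩ B) ≤ f A + f B)
    (k : ℕ) (hk : 1 ≤ k) (hkcard : k ≤ Fintype.card V)
    (OPT : ℝ)
    (hOPT : IsGreatest {x : ℝ | ∃ T : Finset V, T.card ≤ k ∧ f T = x} OPT)
    (S : ℕ → Finset V) (hS0 : S 0 = ∅)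
    (hgreedy : ∀ i < k, ∃ e ∉ S i,
      S (i + 1) = insert e (S i) ∧
      ∀ e' ∉ S i, f (insert e' (S i)) - f (S i) ≤ f (insert e (S i)) - f (S i)) :
    (1 - (1 - 1 / (k : ℝ)) ^ k) * OPT ≤ f (S k) ∧
      (1 - 1 / Real.exp 1) * OPT ≤ (1 - (1 - 1 / (k : ℝ)) ^ k) * OPT := by
  obtain ⟨⟨T, hTcard, hTf⟩, hub⟩ := hOPT
  have hOPT0 : 0 ≤ OPT := by
    have : (0 : ℝ) ∈ {x : ℝ | ∃ T : Finset V, T.card ≤ k ∧ f T = x} :=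
      ⟨∅, by simp [hempty]⟩
    exact hub this
  have hkpos : (0 : ℝ) < (k : ℝ) := by positivity
  have hk1 : (1 : ℝ) / (k : ℝ) ≤ 1 := by
    rw [div_le_one hkpos]; exact_mod_cast hk
  have hbase : (0 : ℝ) ≤ 1 - 1 / (k : ℝ) := by linarith
  -- key per-step inequality
  have key : ∀ i < k, OPT - f (S (i + 1)) ≤ (1 - 1 / (k : ℝ)) * (OPT - f (S i)) := by
    intro i hi
    obtain ⟨e, he, hSe, hmax⟩ := hgreedy i hi
    set δ := f (S (i + 1)) - f (S i) with hδ
    have hδ0 : 0 ≤ δ := by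
      have := hmono (S i) (insert e (S i)) (Finset.subset_insert _ _)
      simp only [hδ, hSe]; linarith
    have h1 : OPT ≤ f (S i ∪ T) := by
      rw [← hTf]; exact hmono _ _ Finset.subset_union_right
    have h2 : f (S i ∪ T) ≤ f (S i) + ∑ e' ∈ T \ S i, (f (insert e' (S i)) - f (S i)) :=
      submodular_marginal_bound f hmono hsub (S i) T
    have h3 : ∑ e' ∈ T \ S i, (f (insert e' (S i)) - f (S i)) ≤ (T \ S i).card * δ := by
      have hb : ∀ e' ∈ T \ S i, f (insert e' (S i)) - f (S i) ≤ δ := by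
        intro e' he'
        have he'' : e' ∉ S i := (Finset.mem_sdiff.mp he').2
        have := hmax e' he''
        rw [hδ, hSe]
        exact this
      have := Finset.sum_le_card_nsmul (T \ S i) (fun e' => f (insert e' (S i)) - f (S i)) δ hb
      simpa [nsmul_eq_mul] using this
    have hcard : ((T \ S i).card : ℝ) ≤ (k : ℝ) := by
      have : (T \ S i).card ≤ T.card := Finset.card_le_card (Finset.sdiff_subset)
      exact_mod_cast le_trans this hTcard
    have h4 : ((T \ S i).card : ℝ) * δ ≤ (k : ℝ) * δ :=
      mul_le_mul_of_nonneg_right hcard hδ0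
    have h5 : OPT - f (S i) ≤ (k : ℝ) * δ := by
      push_cast at h3 ⊢
      linarith
    have hkinv : (1 / (k : ℝ)) * (k : ℝ) = 1 := by
      field_simp
    have h6 : (1 / (k : ℝ)) * (OPT - f (S i)) ≤ δ := by
      have := mul_le_mul_of_nonneg_left h5 (le_of_lt (by positivity : (0:ℝ) < 1 / (k:ℝ)))
      calc (1 / (k : ℝ)) * (OPT - f (S i)) ≤ (1 / (k : ℝ)) * ((k : ℝ) * δ) := this
        _ = δ := by rw [← mul_assoc, hkinv, one_mul]
    have hrw : (1 - 1 / (k : ℝ)) * (OPT - f (S i))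
        = (OPT - f (S i)) - (1 / (k : ℝ)) * (OPT - f (S i)) := by ring
    rw [hrw]
    linarith [h6, hδ]
  -- induction
  have main : ∀ i ≤ k, OPT - f (S i) ≤ (1 - 1 / (k : ℝ)) ^ i * OPT := by
    intro i
    induction i with
    | zero => intro _; simp [hS0, hempty]
    | succ n ih =>
      intro hn
      have hn' : n < k := Nat.lt_of_succ_le hn
      have h1 := key n hn'
      have h2 := ih (le_of_lt hn')
      calc OPT - f (S (n + 1)) ≤ (1 - 1 / (k : ℝ)) * (OPT - f (S n)) := h1
        _ ≤ (1 - 1 / (k : ℝ)) * ((1 - 1 / (k : ℝ)) ^ n * OPT) :=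
            mul_le_mul_of_nonneg_left h2 hbase
        _ = (1 - 1 / (k : ℝ)) ^ (n + 1) * OPT := by ring
  have hfinal := main k le_rfl
  constructor
  · linarith [hfinal]
  · -- (1 - 1/k)^k ≤ 1 / e
    have hexp : (1 : ℝ) - 1 / (k : ℝ) ≤ Real.exp (-(1 / (k : ℝ))) := by
      have := Real.add_one_le_exp (-(1 / (k : ℝ)))
      linarith
    have hpow : (1 - 1 / (k : ℝ)) ^ k ≤ (Real.exp (-(1 / (k : ℝ)))) ^ k :=
      pow_le_pow_left₀ hbase hexp k
    have hexpk : (Real.exp (-(1 / (k : ℝ)))) ^ k = Real.exp (-1) := by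
      rw [← Real.exp_nat_mul]
      congr 1
      field_simp
    have hle : (1 - 1 / (k : ℝ)) ^ k ≤ 1 / Real.exp 1 := by
      rw [hexpk, Real.exp_neg] at hpow
      simpa [one_div] using hpow
    apply mul_le_mul_of_nonneg_right _ hOPT0
    linarith
end

section
/- Let f be monotone submodular with f(∅) = 0 and c a positive linear (additive) cost, c(S) = Σ_{i∈S} w_i with w_i > 0. If S is a current solution and S* any set with c(S*) ≤ B, then there exists e ∈ S* \ S with (f(S ∪ {e}) − f(S))/w_e ≥ (f(S*) − f(S))/c(S*), provided f(S*) > f(S). -/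
lemma marginal_sum_bound {V : Type*} [DecidableEq V]
    (f : Finset V → ℝ)
    (hmono : ∀ A B : Finset V, A ⊆ B → f A ≤ f B)
    (hsub : ∀ A B : Finset V, f (A ∪ B) + f (A ∩ B) ≤ f A + f B)
    (S : Finset V) :
    ∀ T : Finset V, f (S ∪ T) - f S ≤ ∑ e ∈ T, (f (insert e S) - f S) := by
  intro T
  induction T using Finset.induction_on with
  | empty => simp
  | @insert a T ha ih =>
    rw [Finset.sum_insert ha]
    have h1 := hsub (S ∪ T) (insert a S)
    have h2 : f S ≤ f ((S ∪ T) ∩ insert a S) := by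
      apply hmono
      intro x hx
      simp only [Finset.mem_inter, Finset.mem_union, Finset.mem_insert]
      exact ⟨Or.inl hx, Or.inr hx⟩
    have h3 : (S ∪ T) ∪ insert a S = S ∪ insert a T := by
      ext x; simp [Finset.mem_union, Finset.mem_insert]; tauto
    rw [h3] at h1
    linarith

/-- For monotone submodular f with f(∅)=0 and positive additive costs, if
f(S*) > f(S) then some e ∈ S* \ S has cost-scaled marginal gain at least
(f(S*) − f(S))/c(S*). -/
theorem exists_good_cost_scaled_marginal {V : Type*} [Fintype V] [DecidableEq V]
    (f : Finset V → ℝ) (hempty : f ∅ = 0)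
    (hmono : ∀ A B : Finset V, A ⊆ B → f A ≤ f B)
    (hsub : ∀ A B : Finset V, f (A ∪ B) + f (A ∩ B) ≤ f A + f B)
    (w : V → ℝ) (hw : ∀ i : V, 0 < w i)
    (S Sstar : Finset V) (hne : Sstar.Nonempty) (hlt : f S < f Sstar) :
    ∃ e ∈ Sstar \ S,
      (f Sstar - f S) / (∑ i ∈ Sstar, w i) ≤ (f (insert e S) - f S) / w e := by
  by_contra hcon
  push_neg at hcon
  set c : ℝ := ∑ i ∈ Sstar, w i with hc
  have hcpos : 0 < c := Finset.sum_pos (fun i _ => hw i) hne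
  set r : ℝ := (f Sstar - f S) / c with hr
  have hrpos : 0 < r := div_pos (by linarith) hcpos
  have hDne : (Sstar \ S).Nonempty := by
    by_contra h
    rw [Finset.not_nonempty_iff_eq_empty, Finset.sdiff_eq_empty_iff_subset] at h
    exact absurd (hmono _ _ h) (not_le.mpr hlt)
  -- each e in Sstar \ S has gain < r * w e
  have hkey : ∀ e ∈ Sstar \ S, f (insert e S) - f S < r * w e := by
    intro e he
    have := hcon e he
    rwa [div_lt_iff₀ (hw e)] at this
  have hsum1 : f Sstar - f S ≤ ∑ e ∈ Sstar \ S, (f (insert e S) - f S) := by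
    have h1 : f Sstar ≤ f (S ∪ Sstar) := hmono _ _ Finset.subset_union_right
    have h2 := marginal_sum_bound f hmono hsub S Sstar
    have h3 : ∑ e ∈ Sstar, (f (insert e S) - f S)
        = ∑ e ∈ Sstar \ S, (f (insert e S) - f S) := by
      rw [← Finset.sum_sdiff (Finset.inter_subset_left (s₂ := S))]
      have : ∑ e ∈ Sstar ∩ S, (f (insert e S) - f S) = 0 := by
        apply Finset.sum_eq_zero
        intro e he
        have : insert e S = S := Finset.insert_eq_self.mpr (Finset.mem_inter.mp he).2
        rw [this]; ring
      rw [this, add_zero, Finset.sdiff_inter_self_left]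
    linarith [h3 ▸ h2]
  have hsum2 : ∑ e ∈ Sstar \ S, (f (insert e S) - f S) < ∑ e ∈ Sstar \ S, r * w e :=
    Finset.sum_lt_sum_of_nonempty hDne hkey
  have hsum3 : ∑ e ∈ Sstar \ S, r * w e ≤ r * c := by
    rw [← Finset.mul_sum]
    apply mul_le_mul_of_nonneg_left _ (le_of_lt hrpos)
    exact Finset.sum_le_sum_of_subset_of_nonneg (Finset.sdiff_subset)
      (fun i _ _ => (hw i).le)
  have : r * c = f Sstar - f S := by
    rw [hr]; field_simp
  linarith
end

section
/- Let f be monotone submodular with f(∅)=0, c(S)=Σ_{i∈S} w_i with w_i > 0, and fix a target set S* with cost C* = c(S*) > 0. Suppose a sequence S_0 ⊆ S_1 ⊆ … of sets satisfies f(S_{i+1}) − f(S_i) ≥ (w_{e_i}/C*) (f(S*) − f(S_i)) where S_{i+1} = S_i ∪ {e_i}. Then for every index q, f(S*) − f(S_q) ≤ (f(S*) − f(S_0)) · Π_{i<q} (1 − w_{e_i}/C*), and consequently f(S_q) ≥ f(S_0) + (1 − e^{−c'/C*})(f(S*) − f(S_0)) where c' = Σ_{i<q} w_{e_i}, assuming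 w_{e_i} ≤ C* for all i. -/
/-- Greedy chain bound for knapsack-type budgets: if each step closes a
(w_{e_i}/C*)-fraction of the remaining gap to f(S*), then
f(S*) − f(S_q) ≤ (f(S*) − f(S_0))·Π_{i<q}(1 − w_{e_i}/C*), and consequently
f(S_q) ≥ f(S_0) + (1 − e^{−c'/C*})(f(S*) − f(S_0)) with c' = Σ_{i<q} w_{e_i}. -/
theorem greedy_knapsack_chain_bound {V : Type*} [Fintype V] [DecidableEq V]
    (f : Finset V → ℝ) (hempty : f ∅ = 0)
    (hmono : ∀ A B : Finset V, A ⊆ B → f A ≤ f B)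
    (hsub : ∀ A B : Finset V, f (A ∪ B) + f (A ∩ B) ≤ f A + f B)
    (w : V → ℝ) (hw : ∀ i : V, 0 < w i)
    (Sstar : Finset V) (Cstar : ℝ) (hC : Cstar = ∑ i ∈ Sstar, w i)
    (hCpos : 0 < Cstar)
    (S : ℕ → Finset V) (e : ℕ → V)
    (hchain : ∀ i : ℕ, S (i + 1) = insert (e i) (S i))
    (h0 : f (S 0) ≤ f Sstar)
    (hstep : ∀ i : ℕ,
      (w (e i) / Cstar) * (f Sstar - f (S i)) ≤ f (S (i + 1)) - f (S i))
    (hwle : ∀ i : ℕ, w (e i) ≤ Cstar) :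
    ∀ q : ℕ,
      f Sstar - f (S q) ≤
        (f Sstar - f (S 0)) * ∏ i ∈ Finset.range q, (1 - w (e i) / Cstar) ∧
      f (S 0) + (1 - Real.exp (-(∑ i ∈ Finset.range q, w (e i)) / Cstar)) *
          (f Sstar - f (S 0)) ≤ f (S q) := by

  have hr0 : ∀ i : ℕ, 0 ≤ 1 - w (e i) / Cstar := fun i => by
    have := hwle i
    have : w (e i) / Cstar ≤ 1 := by
      rw [div_le_one hCpos]; exact hwle i
    linarith
  have main : ∀ q : ℕ, f Sstar - f (S q) ≤
      (f Sstar - f (S 0)) * ∏ i ∈ Finset.range q, (1 - w (e i) / Cstar) := by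
    intro q
    induction q with
    | zero => simp
    | succ n ih =>
      rw [Finset.prod_range_succ, ← mul_assoc]
      have h1 : f Sstar - f (S (n + 1)) ≤ (1 - w (e n) / Cstar) * (f Sstar - f (S n)) := by
        have := hstep n; ring_nf; ring_nf at this; linarith
      calc f Sstar - f (S (n + 1)) ≤ (1 - w (e n) / Cstar) * (f Sstar - f (S n)) := h1
        _ ≤ (1 - w (e n) / Cstar) * ((f Sstar - f (S 0)) * ∏ i ∈ Finset.range n, (1 - w (e i) / Cstar)) :=
            mul_le_mul_of_nonneg_left ih (hr0 n)
        _ = (f Sstar - f (S 0)) * (∏ i ∈ Finset.range n, (1 - w (e i) / Cstar)) * (1 - w (e n) / Cstar) := by ring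
  intro q
  refine ⟨main q, ?_⟩
  have hPE : (∏ i ∈ Finset.range q, (1 - w (e i) / Cstar)) ≤
      Real.exp (-(∑ i ∈ Finset.range q, w (e i)) / Cstar) := by
    have h1 : (∏ i ∈ Finset.range q, (1 - w (e i) / Cstar)) ≤
        ∏ i ∈ Finset.range q, Real.exp (-(w (e i) / Cstar)) := by
      apply Finset.prod_le_prod (fun i _ => hr0 i)
      intro i _
      have := Real.add_one_le_exp (-(w (e i) / Cstar))
      linarith
    rw [← Real.exp_sum] at h1
    convert h1 using 2
    rw [neg_div, Finset.sum_div, ← Finset.sum_neg_distrib]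
  have hgap0 : 0 ≤ f Sstar - f (S 0) := by linarith
  have := main q
  have h2 : (f Sstar - f (S 0)) * (∏ i ∈ Finset.range q, (1 - w (e i) / Cstar)) ≤
      (f Sstar - f (S 0)) * Real.exp (-(∑ i ∈ Finset.range q, w (e i)) / Cstar) :=
    mul_le_mul_of_nonneg_left hPE hgap0
  nlinarith
end
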